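/- Let F be a finite field with q elements and ψ a nontrivial additive character of F. Let π be an irreducible representation of GL_c(F), c = c₁ + c₂, and π₁, π₂ irreducible representations of GL_{c₁}(F), GL_{c₂}(F) such that π is a subrepresentation of the parabolic induction π₁ ∘ π₂. Let γ(π, ψ) be the scalar defined by q^{-c²/2} Σ_{g ∈ GL_c(F)} ψ(tr g⁻¹) π(g) = γ(π,ψ)·Id. Then γ(π, ψ) = γ(π₁, ψ) · γ(π₂, ψ). -/

import Mathlib

open Matrix TensorProduct
open scoped BigOperators

set_option linter.unusedSectionVars false
set_option maxHeartbeats 1600000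

/-- The block diagonal element `diag(p₁, p₂)` of `GL_{c₁+c₂}(F)`. -/
noncomputable def blockDiagGL {F : Type*} [Field F] [Fintype F] [DecidableEq F] {c₁ c₂ : ℕ}
    (h₁ : GL (Fin c₁) F) (h₂ : GL (Fin c₂) F) : GL (Fin c₁ ⊕ Fin c₂) F :=
  ⟨Matrix.fromBlocks (h₁ : Matrix (Fin c₁) (Fin c₁) F) 0 0 (h₂ : Matrix (Fin c₂) (Fin c₂) F),
   Matrix.fromBlocks (↑h₁⁻¹) 0 0 (↑h₂⁻¹),
   by rw [Matrix.fromBlocks_multiply]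
      simp only [Matrix.mul_zero, Matrix.zero_mul, zero_mul, mul_zero, add_zero, zero_add,
        Units.mul_inv, Matrix.fromBlocks_one],
   by rw [Matrix.fromBlocks_multiply]
      simp only [Matrix.mul_zero, Matrix.zero_mul, zero_mul, mul_zero, add_zero, zero_add,
        Units.inv_mul, Matrix.fromBlocks_one]⟩

/-- The block upper unipotent element `((I, X), (0, I))` of `GL_{c₁+c₂}(F)`. -/
noncomputable def unipGL {F : Type*} [Field F] [Fintype F] [DecidableEq F] {c₁ c₂ : ℕ}
    (X : Matrix (Fin c₁) (Fin c₂) F) : GL (Fin c₁ ⊕ Fin c₂) F :=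
  ⟨Matrix.fromBlocks 1 X 0 1, Matrix.fromBlocks 1 (-X) 0 1,
   by rw [Matrix.fromBlocks_multiply]; simp,
   by rw [Matrix.fromBlocks_multiply]; simp⟩

namespace GammaAux

open Finset

variable {F : Type*} [Field F] [Fintype F] [DecidableEq F] {c₁ c₂ : ℕ}

lemma psi_map_sum (ψ : AddChar F ℂ) {ι : Type*} (s : Finset ι) (f : ι → F) :
    ψ (∑ i ∈ s, f i) = ∏ i ∈ s, ψ (f i) := by
  classical
  induction s using Finset.cons_induction with
  | empty => simp
  | cons a s ha ih => rw [Finset.sum_cons, Finset.prod_cons, AddChar.map_add_eq_mul, ih]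

lemma sum_psi_mul (ψ : AddChar F ℂ) (hψ : ψ ≠ 1) (b : F) :
    ∑ t : F, ψ (b * t) = if b = 0 then (Fintype.card F : ℂ) else 0 := by
  split_ifs with hb
  · simp [hb, Finset.card_univ]
  · have h1 : AddChar.mulShift ψ b ≠ 1 := AddChar.IsPrimitive.of_ne_one hψ hb
    have h0 : AddChar.mulShift ψ b ≠ 0 := h1
    calc ∑ t : F, ψ (b * t) = ∑ t : F, (AddChar.mulShift ψ b) t := by
          simp only [AddChar.mulShift_apply]
      _ = 0 := AddChar.sum_eq_zero_iff_ne_zero.mpr h0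

lemma sum_psi_pairing (ψ : AddChar F ℂ) (hψ : ψ ≠ 1) (W : Matrix (Fin c₂) (Fin c₁) F) :
    ∑ Z : Matrix (Fin c₁) (Fin c₂) F, ψ (∑ j, ∑ i, W j i * Z i j) =
      if W = 0 then ((Fintype.card F : ℂ) ^ (c₁ * c₂)) else 0 := by
  classical
  have key : ∀ Z : Matrix (Fin c₁) (Fin c₂) F,
      ψ (∑ j, ∑ i, W j i * Z i j) = ∏ i, ∏ j, ψ (W j i * Z i j) := by
    intro Z
    rw [Finset.sum_comm, psi_map_sum]
    exact Finset.prod_congr rfl fun i _ => psi_map_sum ψ _ _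
  simp_rw [key]
  have e1 : (∑ Z : Matrix (Fin c₁) (Fin c₂) F, ∏ i, ∏ j, ψ (W j i * Z i j))
      = ∑ Z : (Fin c₁ → Fin c₂ → F), ∏ i, ∏ j, ψ (W j i * Z i j) :=
    (Fintype.sum_equiv (Matrix.of : (Fin c₁ → Fin c₂ → F) ≃ Matrix (Fin c₁) (Fin c₂) F)
      _ _ fun _ => rfl).symm
  rw [e1]
  have e2 : ∑ Z : (Fin c₁ → Fin c₂ → F), ∏ i, ∏ j, ψ (W j i * Z i j)
      = ∏ i : Fin c₁, ∑ z : Fin c₂ → F, ∏ j, ψ (W j i * z j) := by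
    rw [Finset.prod_univ_sum (fun _ : Fin c₁ => (univ : Finset (Fin c₂ → F)))
        (fun i z => ∏ j, ψ (W j i * z j)), Fintype.piFinset_univ]
  have e3 : ∀ i : Fin c₁, (∑ z : Fin c₂ → F, ∏ j, ψ (W j i * z j))
      = ∏ j : Fin c₂, ∑ t : F, ψ (W j i * t) := by
    intro i
    rw [Finset.prod_univ_sum (fun _ : Fin c₂ => (univ : Finset F))
        (fun j t => ψ (W j i * t)), Fintype.piFinset_univ]
  rw [e2]
  simp_rw [e3, sum_psi_mul ψ hψ]
  by_cases hW : W = 0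
  · simp only [hW, Matrix.zero_apply, if_pos rfl, if_true]
    rw [Finset.prod_const, Finset.prod_const]
    simp [Finset.card_univ, ← pow_mul, mul_comm c₁ c₂]
  · rw [if_neg hW]
    have : ∃ j i, W j i ≠ 0 := by
      by_contra h
      push_neg at h
      exact hW (by ext j i; simpa using h j i)
    obtain ⟨j, i, hji⟩ := this
    refine Finset.prod_eq_zero (Finset.mem_univ i) ?_
    exact Finset.prod_eq_zero (Finset.mem_univ j) (if_neg hji)

lemma trace_mul_corner (A : Matrix (Fin c₁ ⊕ Fin c₂) (Fin c₁ ⊕ Fin c₂) F)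
    (Z : Matrix (Fin c₁) (Fin c₂) F) :
    Matrix.trace (A * Matrix.fromBlocks 0 Z 0 0) =
      ∑ j : Fin c₂, ∑ i : Fin c₁, A (Sum.inr j) (Sum.inl i) * Z i j := by
  classical
  simp [Matrix.trace, Matrix.diag, Matrix.mul_apply, Fintype.sum_sum_type,
    Matrix.fromBlocks]

lemma trace_fromBlocks' (A : Matrix (Fin c₁) (Fin c₁) F) (B : Matrix (Fin c₁) (Fin c₂) F)
    (C : Matrix (Fin c₂) (Fin c₁) F) (D : Matrix (Fin c₂) (Fin c₂) F) :
    Matrix.trace (Matrix.fromBlocks A B C D) = Matrix.trace A + Matrix.trace D := by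
  simp [Matrix.trace, Matrix.diag, Fintype.sum_sum_type, Matrix.fromBlocks]

lemma blockDiagGL_coe (h₁ : GL (Fin c₁) F) (h₂ : GL (Fin c₂) F) :
    (blockDiagGL h₁ h₂ : Matrix (Fin c₁ ⊕ Fin c₂) (Fin c₁ ⊕ Fin c₂) F)
      = Matrix.fromBlocks (↑h₁) 0 0 (↑h₂) := rfl

lemma blockDiagGL_inv_coe (h₁ : GL (Fin c₁) F) (h₂ : GL (Fin c₂) F) :
    (((blockDiagGL h₁ h₂)⁻¹ : GL (Fin c₁ ⊕ Fin c₂) F) :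
        Matrix (Fin c₁ ⊕ Fin c₂) (Fin c₁ ⊕ Fin c₂) F)
      = Matrix.fromBlocks (↑h₁⁻¹) 0 0 (↑h₂⁻¹) := rfl

lemma unipGL_coe (X : Matrix (Fin c₁) (Fin c₂) F) :
    (unipGL X : Matrix (Fin c₁ ⊕ Fin c₂) (Fin c₁ ⊕ Fin c₂) F)
      = Matrix.fromBlocks 1 X 0 1 := rfl

lemma unipGL_inv_coe (X : Matrix (Fin c₁) (Fin c₂) F) :
    (((unipGL X)⁻¹ : GL (Fin c₁ ⊕ Fin c₂) F) :
        Matrix (Fin c₁ ⊕ Fin c₂) (Fin c₁ ⊕ Fin c₂) F)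
      = Matrix.fromBlocks 1 (-X) 0 1 := rfl

lemma param_coe (n₁ : GL (Fin c₁) F) (n₂ : GL (Fin c₂) F) (Y : Matrix (Fin c₁) (Fin c₂) F) :
    ((blockDiagGL n₁ n₂ * unipGL Y : GL (Fin c₁ ⊕ Fin c₂) F) :
        Matrix (Fin c₁ ⊕ Fin c₂) (Fin c₁ ⊕ Fin c₂) F)
      = Matrix.fromBlocks (↑n₁) ((↑n₁ : Matrix (Fin c₁) (Fin c₁) F) * Y) 0 (↑n₂) := by
  rw [Units.val_mul, blockDiagGL_coe, unipGL_coe, Matrix.fromBlocks_multiply]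
  simp

lemma param_inv_coe (n₁ : GL (Fin c₁) F) (n₂ : GL (Fin c₂) F) (Y : Matrix (Fin c₁) (Fin c₂) F) :
    ((((blockDiagGL n₁ n₂ * unipGL Y)⁻¹ : GL (Fin c₁ ⊕ Fin c₂) F)) :
        Matrix (Fin c₁ ⊕ Fin c₂) (Fin c₁ ⊕ Fin c₂) F)
      = Matrix.fromBlocks (↑n₁⁻¹)
          (-(Y * (↑n₂⁻¹ : Matrix (Fin c₂) (Fin c₂) F))) 0 (↑n₂⁻¹) := by
  rw [_root_.mul_inv_rev, Units.val_mul, unipGL_inv_coe, blockDiagGL_inv_coe,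
    Matrix.fromBlocks_multiply]
  simp [Matrix.neg_mul]

lemma exists_param (g : GL (Fin c₁ ⊕ Fin c₂) F)
    (h : Matrix.toBlocks₂₁
        ((g⁻¹ : GL (Fin c₁ ⊕ Fin c₂) F) : Matrix (Fin c₁ ⊕ Fin c₂) (Fin c₁ ⊕ Fin c₂) F) = 0) :
    ∃ t : GL (Fin c₁) F × GL (Fin c₂) F × Matrix (Fin c₁) (Fin c₂) F,
      blockDiagGL t.1 t.2.1 * unipGL t.2.2 = g := by
  classical
  set h' : Matrix (Fin c₁ ⊕ Fin c₂) (Fin c₁ ⊕ Fin c₂) F := ((g⁻¹ : GL (Fin c₁ ⊕ Fin c₂) F) :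
    Matrix (Fin c₁ ⊕ Fin c₂) (Fin c₁ ⊕ Fin c₂) F) with hh'
  have hdecomp : h' = Matrix.fromBlocks (Matrix.toBlocks₁₁ h') (Matrix.toBlocks₁₂ h') 0
      (Matrix.toBlocks₂₂ h') := by
    conv_lhs => rw [← Matrix.fromBlocks_toBlocks h']
    rw [hh', h]
  have hunit : IsUnit h' := (g⁻¹ : GL (Fin c₁ ⊕ Fin c₂) F).isUnit
  rw [hdecomp] at hunit
  obtain ⟨hA, hD⟩ := Matrix.isUnit_fromBlocks_zero₂₁.mp hunit
  set a := Matrix.toBlocks₁₁ h'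
  set b := Matrix.toBlocks₁₂ h'
  set d := Matrix.toBlocks₂₂ h'
  set ua : GL (Fin c₁) F := hA.unit with hua
  set ud : GL (Fin c₂) F := hD.unit with hud
  have ha' : (ua : Matrix (Fin c₁) (Fin c₁) F) = a := hA.unit_spec
  have hd' : (ud : Matrix (Fin c₂) (Fin c₂) F) = d := hD.unit_spec
  refine ⟨(ua⁻¹, ud⁻¹, -(b * (↑ud⁻¹ : Matrix (Fin c₂) (Fin c₂) F))), ?_⟩
  have key : (blockDiagGL ua⁻¹ ud⁻¹ *
      unipGL (-(b * (↑ud⁻¹ : Matrix (Fin c₂) (Fin c₂) F)))) * g⁻¹ = 1 := by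
    apply Units.ext
    rw [Units.val_mul, param_coe, ← hh', hdecomp, Matrix.fromBlocks_multiply]
    have h1 : ((ua⁻¹ : GL (Fin c₁) F) : Matrix (Fin c₁) (Fin c₁) F) * a = 1 := by
      rw [← ha']; exact ua.inv_mul
    have h2 : ((ud⁻¹ : GL (Fin c₂) F) : Matrix (Fin c₂) (Fin c₂) F) * d = 1 := by
      rw [← hd']; exact ud.inv_mul
    have hdd : (↑ud⁻¹ : Matrix (Fin c₂) (Fin c₂) F) * d = 1 := by
      rw [← hd']; exact ud.inv_mul
    have h3 : ((ua⁻¹ : GL (Fin c₁) F) : Matrix (Fin c₁) (Fin c₁) F) * b +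
        ((ua⁻¹ : GL (Fin c₁) F) : Matrix (Fin c₁) (Fin c₁) F) *
          (-(b * (↑ud⁻¹ : Matrix (Fin c₂) (Fin c₂) F))) * d = 0 := by
      have h4 : ((ua⁻¹ : GL (Fin c₁) F) : Matrix (Fin c₁) (Fin c₁) F) *
          (-(b * (↑ud⁻¹ : Matrix (Fin c₂) (Fin c₂) F))) * d
          = -(((ua⁻¹ : GL (Fin c₁) F) : Matrix (Fin c₁) (Fin c₁) F) * b) := by
        rw [Matrix.mul_neg, Matrix.neg_mul,
          Matrix.mul_assoc ((ua⁻¹ : GL (Fin c₁) F) : Matrix (Fin c₁) (Fin c₁) F),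
          Matrix.mul_assoc b, hdd, Matrix.mul_one]
      rw [h4, add_neg_cancel]
    simp only [Matrix.mul_zero, Matrix.zero_mul, add_zero, zero_add, h1, h2, h3]
    exact Matrix.fromBlocks_one
  exact mul_inv_eq_one.mp key

lemma sum_param {α : Type*} [AddCommMonoid α] (H : GL (Fin c₁ ⊕ Fin c₂) F → α) :
    ∑ g : GL (Fin c₁ ⊕ Fin c₂) F,
        (if Matrix.toBlocks₂₁
            ((g⁻¹ : GL (Fin c₁ ⊕ Fin c₂) F) : Matrix (Fin c₁ ⊕ Fin c₂) (Fin c₁ ⊕ Fin c₂) F) = 0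
          then H g else 0)
      = ∑ t : GL (Fin c₁) F × GL (Fin c₂) F × Matrix (Fin c₁) (Fin c₂) F,
          H (blockDiagGL t.1 t.2.1 * unipGL t.2.2) := by
  classical
  rw [← Finset.sum_filter]
  refine (Finset.sum_nbij (fun t : GL (Fin c₁) F × GL (Fin c₂) F × Matrix (Fin c₁) (Fin c₂) F =>
      blockDiagGL t.1 t.2.1 * unipGL t.2.2) ?_ ?_ ?_ (fun _ _ => rfl)).symm
  · intro t _
    simp only [Finset.mem_filter, Finset.mem_univ, true_and]
    rw [param_inv_coe]
    exact Matrix.toBlocks_fromBlocks₂₁ _ _ _ _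
  · rintro ⟨a₁, a₂, a₃⟩ _ ⟨b₁, b₂, b₃⟩ _ h
    have h' := congrArg (fun u : GL (Fin c₁ ⊕ Fin c₂) F =>
      (u : Matrix (Fin c₁ ⊕ Fin c₂) (Fin c₁ ⊕ Fin c₂) F)) h
    simp only [param_coe] at h'
    have e11 : (a₁ : Matrix (Fin c₁) (Fin c₁) F) = (b₁ : Matrix (Fin c₁) (Fin c₁) F) := by
      have := congrArg Matrix.toBlocks₁₁ h'
      simpa only [Matrix.toBlocks_fromBlocks₁₁] using this
    have e22 : (a₂ : Matrix (Fin c₂) (Fin c₂) F) = (b₂ : Matrix (Fin c₂) (Fin c₂) F) := by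
      have := congrArg Matrix.toBlocks₂₂ h'
      simpa only [Matrix.toBlocks_fromBlocks₂₂] using this
    have e12 : (a₁ : Matrix (Fin c₁) (Fin c₁) F) * a₃ =
        (b₁ : Matrix (Fin c₁) (Fin c₁) F) * b₃ := by
      have := congrArg Matrix.toBlocks₁₂ h'
      simpa only [Matrix.toBlocks_fromBlocks₁₂] using this
    have ha1 : a₁ = b₁ := Units.ext e11
    have ha2 : a₂ = b₂ := Units.ext e22
    have ha3 : a₃ = b₃ := by
      rw [← ha1] at e12
      calc a₃ = ((a₁⁻¹ : GL (Fin c₁) F) : Matrix (Fin c₁) (Fin c₁) F) *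
            ((a₁ : Matrix (Fin c₁) (Fin c₁) F) * a₃) := by
            rw [← Matrix.mul_assoc, a₁.inv_mul, Matrix.one_mul]
        _ = ((a₁⁻¹ : GL (Fin c₁) F) : Matrix (Fin c₁) (Fin c₁) F) *
            ((a₁ : Matrix (Fin c₁) (Fin c₁) F) * b₃) := by rw [e12]
        _ = b₃ := by rw [← Matrix.mul_assoc, a₁.inv_mul, Matrix.one_mul]
    simp [ha1, ha2, ha3]
  · intro g hg
    simp only [Finset.coe_filter, Finset.mem_univ, true_and, Set.mem_setOf_eq] at hg
    obtain ⟨t, ht⟩ := exists_param g hg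
    exact ⟨t, by simp, ht⟩

lemma sum_psi_unip (ψ : AddChar F ℂ) (hψ : ψ ≠ 1)
    (A : Matrix (Fin c₁ ⊕ Fin c₂) (Fin c₁ ⊕ Fin c₂) F)
    (P : Matrix (Fin c₁) (Fin c₁) F) (m₂ : GL (Fin c₂) F) :
    ∑ X : Matrix (Fin c₁) (Fin c₂) F,
        ψ (Matrix.trace (A * (Matrix.fromBlocks 1 (-X) 0 1 *
          Matrix.fromBlocks P 0 0 (↑m₂⁻¹ : Matrix (Fin c₂) (Fin c₂) F)))) =
      if Matrix.toBlocks₂₁ A = 0 then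
        ((Fintype.card F : ℂ) ^ (c₁ * c₂)) *
          ψ (Matrix.trace (A * Matrix.fromBlocks P 0 0 (↑m₂⁻¹ : Matrix (Fin c₂) (Fin c₂) F)))
      else 0 := by
  classical
  have hsplit : ∀ X : Matrix (Fin c₁) (Fin c₂) F,
      Matrix.fromBlocks 1 (-X) 0 1 *
        Matrix.fromBlocks P 0 0 (↑m₂⁻¹ : Matrix (Fin c₂) (Fin c₂) F)
      = Matrix.fromBlocks P 0 0 (↑m₂⁻¹ : Matrix (Fin c₂) (Fin c₂) F) +
        Matrix.fromBlocks 0 (-(X * (↑m₂⁻¹ : Matrix (Fin c₂) (Fin c₂) F))) 0 0 := by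
    intro X
    have l : Matrix.fromBlocks 1 (-X) 0 1 *
        Matrix.fromBlocks P 0 0 (↑m₂⁻¹ : Matrix (Fin c₂) (Fin c₂) F)
        = Matrix.fromBlocks P (-(X * (↑m₂⁻¹ : Matrix (Fin c₂) (Fin c₂) F))) 0
            (↑m₂⁻¹ : Matrix (Fin c₂) (Fin c₂) F) := by
      rw [Matrix.fromBlocks_multiply]; simp [Matrix.neg_mul]
    have r : Matrix.fromBlocks P 0 0 (↑m₂⁻¹ : Matrix (Fin c₂) (Fin c₂) F) +
        Matrix.fromBlocks 0 (-(X * (↑m₂⁻¹ : Matrix (Fin c₂) (Fin c₂) F))) 0 0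
        = Matrix.fromBlocks P (-(X * (↑m₂⁻¹ : Matrix (Fin c₂) (Fin c₂) F))) 0
            (↑m₂⁻¹ : Matrix (Fin c₂) (Fin c₂) F) := by
      rw [Matrix.fromBlocks_add]; simp
    rw [l, r]
  have hterm : ∀ X : Matrix (Fin c₁) (Fin c₂) F,
      ψ (Matrix.trace (A * (Matrix.fromBlocks 1 (-X) 0 1 *
          Matrix.fromBlocks P 0 0 (↑m₂⁻¹ : Matrix (Fin c₂) (Fin c₂) F)))) =
      ψ (Matrix.trace (A * Matrix.fromBlocks P 0 0 (↑m₂⁻¹ : Matrix (Fin c₂) (Fin c₂) F))) *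
        ψ (Matrix.trace (A *
            Matrix.fromBlocks 0 (-(X * (↑m₂⁻¹ : Matrix (Fin c₂) (Fin c₂) F))) 0 0)) := by
    intro X
    rw [hsplit X, Matrix.mul_add, Matrix.trace_add, AddChar.map_add_eq_mul]
  simp_rw [hterm]
  rw [← Finset.mul_sum]
  have hbij : Function.Bijective (fun X : Matrix (Fin c₁) (Fin c₂) F =>
      -(X * ((m₂ : GL (Fin c₂) F) : Matrix (Fin c₂) (Fin c₂) F))) := by
    refine Function.bijective_iff_has_inverse.mpr
      ⟨fun Z => -(Z * (↑m₂⁻¹ : Matrix (Fin c₂) (Fin c₂) F)), fun X => ?_, fun Z => ?_⟩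
    · show -(-(X * ((m₂ : GL (Fin c₂) F) : Matrix (Fin c₂) (Fin c₂) F)) *
          (↑m₂⁻¹ : Matrix (Fin c₂) (Fin c₂) F)) = X
      rw [Matrix.neg_mul, neg_neg, Matrix.mul_assoc, Units.mul_inv, Matrix.mul_one]
    · show -(-(Z * (↑m₂⁻¹ : Matrix (Fin c₂) (Fin c₂) F)) *
          ((m₂ : GL (Fin c₂) F) : Matrix (Fin c₂) (Fin c₂) F)) = Z
      rw [Matrix.neg_mul, neg_neg, Matrix.mul_assoc, Units.inv_mul, Matrix.mul_one]
  have hre : ∑ X : Matrix (Fin c₁) (Fin c₂) F,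
      ψ (Matrix.trace (A *
        Matrix.fromBlocks 0 (-(X * (↑m₂⁻¹ : Matrix (Fin c₂) (Fin c₂) F))) 0 0)) =
      ∑ Z : Matrix (Fin c₁) (Fin c₂) F, ψ (Matrix.trace (A * Matrix.fromBlocks 0 Z 0 0)) := by
    refine (Fintype.sum_bijective _ hbij
      (fun Z => ψ (Matrix.trace (A * Matrix.fromBlocks 0 Z 0 0))) _ fun X => ?_).symm
    congr 3
    rw [Matrix.neg_mul, neg_neg, Matrix.mul_assoc, Units.mul_inv, Matrix.mul_one]
  rw [hre]
  have hfin : ∑ Z : Matrix (Fin c₁) (Fin c₂) F, ψ (Matrix.trace (A * Matrix.fromBlocks 0 Z 0 0))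
      = if Matrix.toBlocks₂₁ A = 0 then ((Fintype.card F : ℂ) ^ (c₁ * c₂)) else 0 := by
    have : ∀ Z : Matrix (Fin c₁) (Fin c₂) F,
        Matrix.trace (A * Matrix.fromBlocks 0 Z 0 0)
          = ∑ j, ∑ i, Matrix.toBlocks₂₁ A j i * Z i j := by
      intro Z
      rw [trace_mul_corner]
      rfl
    simp_rw [this]
    exact sum_psi_pairing ψ hψ (Matrix.toBlocks₂₁ A)
  rw [hfin]
  split_ifs with h
  · ring
  · rw [mul_zero]

lemma map_sum_sum {V₁ V₂ : Type*} [AddCommGroup V₁] [Module ℂ V₁] [AddCommGroup V₂] [Module ℂ V₂]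
    {ι κ : Type*} [Fintype ι] [Fintype κ]
    (c : ι → ℂ) (d : κ → ℂ) (f : ι → V₁ →ₗ[ℂ] V₁) (g : κ → V₂ →ₗ[ℂ] V₂) :
    TensorProduct.map (∑ a, c a • f a) (∑ b, d b • g b)
      = ∑ a, ∑ b, (c a * d b) • TensorProduct.map (f a) (g b) := by
  rw [← TensorProduct.mapBilinear_apply]
  simp only [map_sum, _root_.map_smul, LinearMap.sum_apply, LinearMap.smul_apply,
    TensorProduct.mapBilinear_apply, Finset.smul_sum, smul_smul]
  rw [Finset.sum_comm]
  exact Finset.sum_congr rfl fun a _ => Finset.sum_congr rfl fun b _ => by rw [mul_comm]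

end GammaAux

/-- Multiplicativity of the Kondo–Godement–Jacquet Gauss-sum gamma factor:
if `π` is an irreducible subrepresentation of the parabolic induction `π₁ ∘ π₂`
(realized by an injective equivariant embedding into the induced space of functions
`GL_c(F) → V₁ ⊗ V₂`), then `γ(π, ψ) = γ(π₁, ψ) · γ(π₂, ψ)`. -/
theorem gaussSum_gamma_multiplicative {F : Type*} [Field F] [Fintype F] [DecidableEq F]
    (ψ : AddChar F ℂ) (hψ : ψ ≠ 1) (c₁ c₂ : ℕ)
    {V V₁ V₂ : Type*}
    [AddCommGroup V] [Module ℂ V] [FiniteDimensional ℂ V] [Nontrivial V]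
    [AddCommGroup V₁] [Module ℂ V₁] [FiniteDimensional ℂ V₁] [Nontrivial V₁]
    [AddCommGroup V₂] [Module ℂ V₂] [FiniteDimensional ℂ V₂] [Nontrivial V₂]
    (π : Representation ℂ (GL (Fin c₁ ⊕ Fin c₂) F) V)
    (π₁ : Representation ℂ (GL (Fin c₁) F) V₁)
    (π₂ : Representation ℂ (GL (Fin c₂) F) V₂)
    (hirr : ∀ p : Submodule ℂ V,
      (∀ g : GL (Fin c₁ ⊕ Fin c₂) F, ∀ v ∈ p, π g v ∈ p) → p = ⊥ ∨ p = ⊤)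
    (hirr₁ : ∀ p : Submodule ℂ V₁,
      (∀ g : GL (Fin c₁) F, ∀ v ∈ p, π₁ g v ∈ p) → p = ⊥ ∨ p = ⊤)
    (hirr₂ : ∀ p : Submodule ℂ V₂,
      (∀ g : GL (Fin c₂) F, ∀ v ∈ p, π₂ g v ∈ p) → p = ⊥ ∨ p = ⊤)
    -- `π` is a subrepresentation of the parabolic induction `π₁ ∘ π₂`
    (hsub : ∃ Φ : V →ₗ[ℂ] ((GL (Fin c₁ ⊕ Fin c₂) F) → (V₁ ⊗[ℂ] V₂)),
      Function.Injective Φ ∧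
      (∀ (v : V) (g₀ g : GL (Fin c₁ ⊕ Fin c₂) F), Φ (π g₀ v) g = Φ v (g * g₀)) ∧
      (∀ (v : V) (p₁ : GL (Fin c₁) F) (p₂ : GL (Fin c₂) F)
          (X : Matrix (Fin c₁) (Fin c₂) F) (g : GL (Fin c₁ ⊕ Fin c₂) F),
        Φ v ((blockDiagGL p₁ p₂ * unipGL X) * g) =
          TensorProduct.map (π₁ p₁) (π₂ p₂) (Φ v g)))
    (γ γ₁ γ₂ : ℂ)
    (hγ : ((Real.sqrt (Fintype.card F) : ℂ) ^ (-(((c₁ + c₂) ^ 2 : ℕ) : ℤ))) •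
        (∑ g : GL (Fin c₁ ⊕ Fin c₂) F,
          ψ (Matrix.trace ((g⁻¹ : GL (Fin c₁ ⊕ Fin c₂) F) :
            Matrix (Fin c₁ ⊕ Fin c₂) (Fin c₁ ⊕ Fin c₂) F)) • (π g)) =
      γ • (LinearMap.id : V →ₗ[ℂ] V))
    (hγ₁ : ((Real.sqrt (Fintype.card F) : ℂ) ^ (-(c₁ ^ 2 : ℤ))) •
        (∑ g : GL (Fin c₁) F,
          ψ (Matrix.trace ((g⁻¹ : GL (Fin c₁) F) : Matrix (Fin c₁) (Fin c₁) F)) • (π₁ g)) =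
      γ₁ • (LinearMap.id : V₁ →ₗ[ℂ] V₁))
    (hγ₂ : ((Real.sqrt (Fintype.card F) : ℂ) ^ (-(c₂ ^ 2 : ℤ))) •
        (∑ g : GL (Fin c₂) F,
          ψ (Matrix.trace ((g⁻¹ : GL (Fin c₂) F) : Matrix (Fin c₂) (Fin c₂) F)) • (π₂ g)) =
      γ₂ • (LinearMap.id : V₂ →ₗ[ℂ] V₂)) :
    γ = γ₁ * γ₂ := by
  classical
  obtain ⟨Φ, hΦinj, hΦeq, hΦpar⟩ := hsub
  obtain ⟨v₀, hv₀⟩ := exists_ne (0 : V)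
  have hΦv₀ : Φ v₀ ≠ 0 := fun h => hv₀ (hΦinj (h.trans (map_zero Φ).symm))
  obtain ⟨g₀, hg₀⟩ : ∃ g₀, Φ v₀ g₀ ≠ 0 := by
    by_contra h
    push_neg at h
    exact hΦv₀ (funext h)
  set v : V := π g₀ v₀ with hv
  have hw : Φ v 1 ≠ 0 := by
    rw [hv, hΦeq, one_mul]; exact hg₀
  set w : V₁ ⊗[ℂ] V₂ := Φ v 1 with hwdef
  -- scalars
  set C : ℂ := (Real.sqrt (Fintype.card F) : ℂ) ^ (-(((c₁ + c₂) ^ 2 : ℕ) : ℤ)) with hC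
  set C₁ : ℂ := (Real.sqrt (Fintype.card F) : ℂ) ^ (-(c₁ ^ 2 : ℤ)) with hC₁
  set C₂ : ℂ := (Real.sqrt (Fintype.card F) : ℂ) ^ (-(c₂ ^ 2 : ℤ)) with hC₂
  have hs0 : (Real.sqrt (Fintype.card F) : ℂ) ≠ 0 := by
    have h1 : (0:ℝ) < Real.sqrt (Fintype.card F) :=
      Real.sqrt_pos.mpr (by exact_mod_cast Fintype.card_pos)
    exact Complex.ofReal_ne_zero.mpr h1.ne'
  have hC0 : C ≠ 0 := by rw [hC]; exact zpow_ne_zero _ hs0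
  have hC₁0 : C₁ ≠ 0 := by rw [hC₁]; exact zpow_ne_zero _ hs0
  have hC₂0 : C₂ ≠ 0 := by rw [hC₂]; exact zpow_ne_zero _ hs0
  set Q : ℂ := ((Fintype.card F : ℂ)) ^ (c₁ * c₂) with hQdef
  have hQ0 : Q ≠ 0 := by
    rw [hQdef]
    exact pow_ne_zero _ (Nat.cast_ne_zero.mpr Fintype.card_ne_zero)
  have hQC : C * Q = C₁ * C₂ := by
    have hs2 : ((Real.sqrt (Fintype.card F) : ℂ)) ^ (2 : ℕ) = (Fintype.card F : ℂ) := by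
      rw [← Complex.ofReal_pow, Real.sq_sqrt (by positivity)]
      norm_cast
    rw [hC, hC₁, hC₂, hQdef, ← hs2, ← pow_mul,
      ← zpow_natCast ((Real.sqrt (Fintype.card F) : ℂ)) (2 * (c₁ * c₂)),
      ← zpow_add₀ hs0, ← zpow_add₀ hs0]
    congr 1
    push_cast
    ring
  set N₁ : ℂ := (Fintype.card (GL (Fin c₁) F) : ℂ) with hN₁
  set N₂ : ℂ := (Fintype.card (GL (Fin c₂) F) : ℂ) with hN₂
  set QM : ℂ := (Fintype.card (Matrix (Fin c₁) (Fin c₂) F) : ℂ) with hQM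
  have hN₁0 : N₁ ≠ 0 := by rw [hN₁]; exact Nat.cast_ne_zero.mpr Fintype.card_ne_zero
  have hN₂0 : N₂ ≠ 0 := by rw [hN₂]; exact Nat.cast_ne_zero.mpr Fintype.card_ne_zero
  have hQM0 : QM ≠ 0 := by rw [hQM]; exact Nat.cast_ne_zero.mpr Fintype.card_ne_zero
  -- the operators
  set S₁ : V₁ →ₗ[ℂ] V₁ := ∑ g : GL (Fin c₁) F,
    ψ (Matrix.trace ((g⁻¹ : GL (Fin c₁) F) : Matrix (Fin c₁) (Fin c₁) F)) • (π₁ g) with hS₁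
  set S₂ : V₂ →ₗ[ℂ] V₂ := ∑ g : GL (Fin c₂) F,
    ψ (Matrix.trace ((g⁻¹ : GL (Fin c₂) F) : Matrix (Fin c₂) (Fin c₂) F)) • (π₂ g) with hS₂
  -- the basic vector-valued Gauss sum
  set T : GL (Fin c₁ ⊕ Fin c₂) F → V₁ ⊗[ℂ] V₂ := fun g =>
    ψ (Matrix.trace ((g⁻¹ : GL (Fin c₁ ⊕ Fin c₂) F) :
      Matrix (Fin c₁ ⊕ Fin c₂) (Fin c₁ ⊕ Fin c₂) F)) • Φ v g with hT
  set B : V₁ ⊗[ℂ] V₂ := ∑ g : GL (Fin c₁ ⊕ Fin c₂) F, T g with hB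
  have hTz : ∀ z : GL (Fin c₁ ⊕ Fin c₂) F, T z =
      ψ (Matrix.trace ((z⁻¹ : GL (Fin c₁ ⊕ Fin c₂) F) :
        Matrix (Fin c₁ ⊕ Fin c₂) (Fin c₁ ⊕ Fin c₂) F)) • Φ v z := fun z => rfl
  have hCB : C • B = γ • w := by
    have h1 := congrArg (fun L : V →ₗ[ℂ] V => Φ (L v) 1) hγ
    simp only [LinearMap.smul_apply, LinearMap.sum_apply, LinearMap.id_apply,
      _root_.map_smul, _root_.map_sum, Finset.sum_apply, Pi.smul_apply,
      hΦeq, one_mul] at h1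
    rw [hB]
    simp only [hTz]
    simp only [hv, hwdef, hΦeq, one_mul]
    simpa [hv, hΦeq] using h1
  -- Step 1: the quadruple sum, counted the trivial way
  have hE1 : ∑ m : GL (Fin c₁) F × GL (Fin c₂) F, ∑ X : Matrix (Fin c₁) (Fin c₂) F,
      ∑ g : GL (Fin c₁ ⊕ Fin c₂) F, T ((blockDiagGL m.1 m.2 * unipGL X) * g)
      = (N₁ * N₂ * QM) • B := by
    have inner : ∀ p : GL (Fin c₁ ⊕ Fin c₂) F,
        (∑ g : GL (Fin c₁ ⊕ Fin c₂) F, T (p * g)) = B := fun p =>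
      (Fintype.sum_bijective (fun g => p * g) (Group.mulLeft_bijective p)
        (fun g => T (p * g)) T (fun _ => rfl)).trans hB.symm
    calc ∑ m : GL (Fin c₁) F × GL (Fin c₂) F, ∑ X : Matrix (Fin c₁) (Fin c₂) F,
        ∑ g : GL (Fin c₁ ⊕ Fin c₂) F, T ((blockDiagGL m.1 m.2 * unipGL X) * g)
        = ∑ _m : GL (Fin c₁) F × GL (Fin c₂) F, ∑ _X : Matrix (Fin c₁) (Fin c₂) F, B :=
          Finset.sum_congr rfl fun m _ => Finset.sum_congr rfl fun X _ => inner _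
      _ = (N₁ * N₂ * QM) • B := by
          rw [Finset.sum_const, Finset.sum_const, Finset.card_univ, Finset.card_univ,
            ← Nat.cast_smul_eq_nsmul ℂ, ← Nat.cast_smul_eq_nsmul ℂ, smul_smul,
            Fintype.card_prod]
          congr 1
          rw [hN₁, hN₂, hQM]
          push_cast
          ring
  -- Step 2a: collapse the unipotent sum via the character sum
  have hstep1 : ∀ (m : GL (Fin c₁) F × GL (Fin c₂) F) (g : GL (Fin c₁ ⊕ Fin c₂) F),
      (∑ X : Matrix (Fin c₁) (Fin c₂) F, T ((blockDiagGL m.1 m.2 * unipGL X) * g))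
      = if Matrix.toBlocks₂₁ ((g⁻¹ : GL (Fin c₁ ⊕ Fin c₂) F) :
            Matrix (Fin c₁ ⊕ Fin c₂) (Fin c₁ ⊕ Fin c₂) F) = 0
        then Q • (ψ (Matrix.trace (((g⁻¹ : GL (Fin c₁ ⊕ Fin c₂) F) :
              Matrix (Fin c₁ ⊕ Fin c₂) (Fin c₁ ⊕ Fin c₂) F) *
            Matrix.fromBlocks (↑m.1⁻¹) 0 0 (↑m.2⁻¹))) •
          TensorProduct.map (π₁ m.1) (π₂ m.2) (Φ v g))
        else 0 := by
    intro m g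
    have htr : ∀ X : Matrix (Fin c₁) (Fin c₂) F,
        ((((blockDiagGL m.1 m.2 * unipGL X) * g)⁻¹ : GL (Fin c₁ ⊕ Fin c₂) F) :
          Matrix (Fin c₁ ⊕ Fin c₂) (Fin c₁ ⊕ Fin c₂) F)
        = ((g⁻¹ : GL (Fin c₁ ⊕ Fin c₂) F) : Matrix (Fin c₁ ⊕ Fin c₂) (Fin c₁ ⊕ Fin c₂) F) *
            (Matrix.fromBlocks 1 (-X) 0 1 * Matrix.fromBlocks (↑m.1⁻¹) 0 0 (↑m.2⁻¹)) := by
      intro X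
      rw [_root_.mul_inv_rev, _root_.mul_inv_rev, Units.val_mul, Units.val_mul,
        GammaAux.unipGL_inv_coe, GammaAux.blockDiagGL_inv_coe]
    calc (∑ X : Matrix (Fin c₁) (Fin c₂) F, T ((blockDiagGL m.1 m.2 * unipGL X) * g))
        = ∑ X : Matrix (Fin c₁) (Fin c₂) F,
            ψ (Matrix.trace (((g⁻¹ : GL (Fin c₁ ⊕ Fin c₂) F) :
                Matrix (Fin c₁ ⊕ Fin c₂) (Fin c₁ ⊕ Fin c₂) F) *
              (Matrix.fromBlocks 1 (-X) 0 1 * Matrix.fromBlocks (↑m.1⁻¹) 0 0 (↑m.2⁻¹)))) •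
              TensorProduct.map (π₁ m.1) (π₂ m.2) (Φ v g) := by
          refine Finset.sum_congr rfl fun X _ => ?_
          rw [hTz, htr X, hΦpar]
      _ = (∑ X : Matrix (Fin c₁) (Fin c₂) F,
            ψ (Matrix.trace (((g⁻¹ : GL (Fin c₁ ⊕ Fin c₂) F) :
                Matrix (Fin c₁ ⊕ Fin c₂) (Fin c₁ ⊕ Fin c₂) F) *
              (Matrix.fromBlocks 1 (-X) 0 1 * Matrix.fromBlocks (↑m.1⁻¹) 0 0 (↑m.2⁻¹))))) •
              TensorProduct.map (π₁ m.1) (π₂ m.2) (Φ v g) := by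
            rw [Finset.sum_smul]
      _ = _ := by
          rw [GammaAux.sum_psi_unip ψ hψ _ _ m.2, ← hQdef]
          rw [ite_smul, zero_smul]
          split_ifs with hcond
          · rw [mul_smul]
          · rfl
  -- Step 2b: the parametrized sum over the parabolic
  have hstep2 : ∀ m : GL (Fin c₁) F × GL (Fin c₂) F,
      (∑ g : GL (Fin c₁ ⊕ Fin c₂) F,
        (if Matrix.toBlocks₂₁ ((g⁻¹ : GL (Fin c₁ ⊕ Fin c₂) F) :
              Matrix (Fin c₁ ⊕ Fin c₂) (Fin c₁ ⊕ Fin c₂) F) = 0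
          then Q • (ψ (Matrix.trace (((g⁻¹ : GL (Fin c₁ ⊕ Fin c₂) F) :
                Matrix (Fin c₁ ⊕ Fin c₂) (Fin c₁ ⊕ Fin c₂) F) *
              Matrix.fromBlocks (↑m.1⁻¹) 0 0 (↑m.2⁻¹))) •
            TensorProduct.map (π₁ m.1) (π₂ m.2) (Φ v g))
          else 0))
      = Q • (QM • (∑ n : GL (Fin c₁) F × GL (Fin c₂) F,
          (ψ (Matrix.trace (((m.1 * n.1)⁻¹ : GL (Fin c₁) F) : Matrix (Fin c₁) (Fin c₁) F)) *
            ψ (Matrix.trace (((m.2 * n.2)⁻¹ : GL (Fin c₂) F) : Matrix (Fin c₂) (Fin c₂) F))) •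
            TensorProduct.map (π₁ (m.1 * n.1)) (π₂ (m.2 * n.2)) w)) := by
    intro m
    rw [GammaAux.sum_param]
    have hval : ∀ (n₁ : GL (Fin c₁) F) (n₂ : GL (Fin c₂) F) (Y : Matrix (Fin c₁) (Fin c₂) F),
        Q • (ψ (Matrix.trace ((((blockDiagGL n₁ n₂ * unipGL Y)⁻¹ : GL (Fin c₁ ⊕ Fin c₂) F) :
              Matrix (Fin c₁ ⊕ Fin c₂) (Fin c₁ ⊕ Fin c₂) F) *
            Matrix.fromBlocks (↑m.1⁻¹) 0 0 (↑m.2⁻¹))) •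
          TensorProduct.map (π₁ m.1) (π₂ m.2) (Φ v (blockDiagGL n₁ n₂ * unipGL Y)))
        = Q • ((ψ (Matrix.trace (((m.1 * n₁)⁻¹ : GL (Fin c₁) F) : Matrix (Fin c₁) (Fin c₁) F)) *
            ψ (Matrix.trace (((m.2 * n₂)⁻¹ : GL (Fin c₂) F) : Matrix (Fin c₂) (Fin c₂) F))) •
            TensorProduct.map (π₁ (m.1 * n₁)) (π₂ (m.2 * n₂)) w) := by
      intro n₁ n₂ Y
      have htr2 : ((((blockDiagGL n₁ n₂ * unipGL Y)⁻¹ : GL (Fin c₁ ⊕ Fin c₂) F) :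
            Matrix (Fin c₁ ⊕ Fin c₂) (Fin c₁ ⊕ Fin c₂) F) *
          Matrix.fromBlocks (↑m.1⁻¹) 0 0 (↑m.2⁻¹))
          = Matrix.fromBlocks
              (((n₁⁻¹ : GL (Fin c₁) F) : Matrix (Fin c₁) (Fin c₁) F) *
                ((m.1⁻¹ : GL (Fin c₁) F) : Matrix (Fin c₁) (Fin c₁) F))
              (-(Y * (↑n₂⁻¹ : Matrix (Fin c₂) (Fin c₂) F)) *
                ((m.2⁻¹ : GL (Fin c₂) F) : Matrix (Fin c₂) (Fin c₂) F)) 0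
              (((n₂⁻¹ : GL (Fin c₂) F) : Matrix (Fin c₂) (Fin c₂) F) *
                ((m.2⁻¹ : GL (Fin c₂) F) : Matrix (Fin c₂) (Fin c₂) F)) := by
        rw [GammaAux.param_inv_coe, Matrix.fromBlocks_multiply]
        simp
      have hφ : Φ v (blockDiagGL n₁ n₂ * unipGL Y)
          = TensorProduct.map (π₁ n₁) (π₂ n₂) w := by
        rw [show blockDiagGL n₁ n₂ * unipGL Y = (blockDiagGL n₁ n₂ * unipGL Y) * 1 from
          (mul_one _).symm, hΦpar, hwdef]
      rw [htr2, hφ, GammaAux.trace_fromBlocks', AddChar.map_add_eq_mul]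
      have e1 : ((n₁⁻¹ : GL (Fin c₁) F) : Matrix (Fin c₁) (Fin c₁) F) *
          ((m.1⁻¹ : GL (Fin c₁) F) : Matrix (Fin c₁) (Fin c₁) F)
          = (((m.1 * n₁)⁻¹ : GL (Fin c₁) F) : Matrix (Fin c₁) (Fin c₁) F) := by
        rw [_root_.mul_inv_rev, Units.val_mul]
      have e2 : ((n₂⁻¹ : GL (Fin c₂) F) : Matrix (Fin c₂) (Fin c₂) F) *
          ((m.2⁻¹ : GL (Fin c₂) F) : Matrix (Fin c₂) (Fin c₂) F)
          = (((m.2 * n₂)⁻¹ : GL (Fin c₂) F) : Matrix (Fin c₂) (Fin c₂) F) := by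
        rw [_root_.mul_inv_rev, Units.val_mul]
      have e3 : TensorProduct.map (π₁ m.1) (π₂ m.2) (TensorProduct.map (π₁ n₁) (π₂ n₂) w)
          = TensorProduct.map (π₁ (m.1 * n₁)) (π₂ (m.2 * n₂)) w := by
        rw [_root_.map_mul, _root_.map_mul, Module.End.mul_eq_comp, Module.End.mul_eq_comp,
          TensorProduct.map_comp, LinearMap.comp_apply]
      rw [e1, e2, e3]
    calc ∑ t : GL (Fin c₁) F × GL (Fin c₂) F × Matrix (Fin c₁) (Fin c₂) F,
          Q • (ψ (Matrix.trace ((((blockDiagGL t.1 t.2.1 * unipGL t.2.2)⁻¹ :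
                GL (Fin c₁ ⊕ Fin c₂) F) :
              Matrix (Fin c₁ ⊕ Fin c₂) (Fin c₁ ⊕ Fin c₂) F) *
            Matrix.fromBlocks (↑m.1⁻¹) 0 0 (↑m.2⁻¹))) •
            TensorProduct.map (π₁ m.1) (π₂ m.2) (Φ v (blockDiagGL t.1 t.2.1 * unipGL t.2.2)))
        = ∑ n₁ : GL (Fin c₁) F, ∑ n₂ : GL (Fin c₂) F, ∑ _Y : Matrix (Fin c₁) (Fin c₂) F,
            Q • ((ψ (Matrix.trace (((m.1 * n₁)⁻¹ : GL (Fin c₁) F) :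
                Matrix (Fin c₁) (Fin c₁) F)) *
              ψ (Matrix.trace (((m.2 * n₂)⁻¹ : GL (Fin c₂) F) :
                Matrix (Fin c₂) (Fin c₂) F))) •
              TensorProduct.map (π₁ (m.1 * n₁)) (π₂ (m.2 * n₂)) w) := by
          rw [Fintype.sum_prod_type]
          refine Finset.sum_congr rfl fun n₁ _ => ?_
          rw [Fintype.sum_prod_type]
          refine Finset.sum_congr rfl fun n₂ _ => Finset.sum_congr rfl fun Y _ => hval n₁ n₂ Y
      _ = _ := by
          rw [Fintype.sum_prod_type]
          simp only [Finset.sum_const, Finset.card_univ, ← Nat.cast_smul_eq_nsmul ℂ, ← hQM]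
          rw [Finset.smul_sum, Finset.smul_sum]
          refine Finset.sum_congr rfl fun n₁ _ => ?_
          rw [Finset.smul_sum, Finset.smul_sum]
          refine Finset.sum_congr rfl fun n₂ _ => ?_
          rw [smul_smul, smul_smul, smul_smul, mul_comm QM Q, smul_smul]
  -- Step 2c: the double averaged sum collapses to the product of Gauss sums
  have hstep3 : ∑ m : GL (Fin c₁) F × GL (Fin c₂) F, ∑ n : GL (Fin c₁) F × GL (Fin c₂) F,
      (ψ (Matrix.trace (((m.1 * n.1)⁻¹ : GL (Fin c₁) F) : Matrix (Fin c₁) (Fin c₁) F)) *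
        ψ (Matrix.trace (((m.2 * n.2)⁻¹ : GL (Fin c₂) F) : Matrix (Fin c₂) (Fin c₂) F))) •
        TensorProduct.map (π₁ (m.1 * n.1)) (π₂ (m.2 * n.2)) w
      = (N₁ * N₂) • TensorProduct.map S₁ S₂ w := by
    have hm : ∀ m : GL (Fin c₁) F × GL (Fin c₂) F,
        (∑ n : GL (Fin c₁) F × GL (Fin c₂) F,
          (ψ (Matrix.trace (((m.1 * n.1)⁻¹ : GL (Fin c₁) F) : Matrix (Fin c₁) (Fin c₁) F)) *
            ψ (Matrix.trace (((m.2 * n.2)⁻¹ : GL (Fin c₂) F) : Matrix (Fin c₂) (Fin c₂) F))) •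
            TensorProduct.map (π₁ (m.1 * n.1)) (π₂ (m.2 * n.2)) w)
        = ∑ k : GL (Fin c₁) F × GL (Fin c₂) F,
            (ψ (Matrix.trace ((k.1⁻¹ : GL (Fin c₁) F) : Matrix (Fin c₁) (Fin c₁) F)) *
              ψ (Matrix.trace ((k.2⁻¹ : GL (Fin c₂) F) : Matrix (Fin c₂) (Fin c₂) F))) •
              TensorProduct.map (π₁ k.1) (π₂ k.2) w := by
      intro m
      exact Fintype.sum_bijective (Prod.map (fun x => m.1 * x) (fun x => m.2 * x))
        ((Group.mulLeft_bijective m.1).prodMap (Group.mulLeft_bijective m.2))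
        _ _ (fun n => rfl)
    have hk : ∑ k : GL (Fin c₁) F × GL (Fin c₂) F,
        (ψ (Matrix.trace ((k.1⁻¹ : GL (Fin c₁) F) : Matrix (Fin c₁) (Fin c₁) F)) *
          ψ (Matrix.trace ((k.2⁻¹ : GL (Fin c₂) F) : Matrix (Fin c₂) (Fin c₂) F))) •
          TensorProduct.map (π₁ k.1) (π₂ k.2) w
        = TensorProduct.map S₁ S₂ w := by
      rw [hS₁, hS₂, GammaAux.map_sum_sum]
      rw [Fintype.sum_prod_type]
      simp only [LinearMap.sum_apply, LinearMap.smul_apply]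
    simp_rw [hm]
    rw [hk, Finset.sum_const, Finset.card_univ, ← Nat.cast_smul_eq_nsmul ℂ,
      Fintype.card_prod]
    congr 1
    rw [hN₁, hN₂]
    push_cast
    ring
  -- assemble
  have hEtotal : (N₁ * N₂ * QM) • B = Q • (QM • ((N₁ * N₂) • TensorProduct.map S₁ S₂ w)) := by
    rw [← hE1]
    calc ∑ m : GL (Fin c₁) F × GL (Fin c₂) F, ∑ X : Matrix (Fin c₁) (Fin c₂) F,
        ∑ g : GL (Fin c₁ ⊕ Fin c₂) F, T ((blockDiagGL m.1 m.2 * unipGL X) * g)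
        = ∑ m : GL (Fin c₁) F × GL (Fin c₂) F, ∑ g : GL (Fin c₁ ⊕ Fin c₂) F,
            ∑ X : Matrix (Fin c₁) (Fin c₂) F, T ((blockDiagGL m.1 m.2 * unipGL X) * g) :=
          Finset.sum_congr rfl fun m _ => Finset.sum_comm
      _ = ∑ m : GL (Fin c₁) F × GL (Fin c₂) F,
            Q • (QM • (∑ n : GL (Fin c₁) F × GL (Fin c₂) F,
              (ψ (Matrix.trace (((m.1 * n.1)⁻¹ : GL (Fin c₁) F) :
                  Matrix (Fin c₁) (Fin c₁) F)) *
                ψ (Matrix.trace (((m.2 * n.2)⁻¹ : GL (Fin c₂) F) :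
                  Matrix (Fin c₂) (Fin c₂) F))) •
                TensorProduct.map (π₁ (m.1 * n.1)) (π₂ (m.2 * n.2)) w)) := by
          refine Finset.sum_congr rfl fun m _ => ?_
          rw [← hstep2 m]
          exact Finset.sum_congr rfl fun g _ => hstep1 m g
      _ = Q • (QM • ((N₁ * N₂) • TensorProduct.map S₁ S₂ w)) := by
          rw [← Finset.smul_sum, ← Finset.smul_sum, hstep3]
  have hBQ : B = Q • TensorProduct.map S₁ S₂ w := by
    have hNM : (N₁ * N₂ * QM) ≠ 0 := mul_ne_zero (mul_ne_zero hN₁0 hN₂0) hQM0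
    have h2 := congrArg (fun x : V₁ ⊗[ℂ] V₂ => (N₁ * N₂ * QM)⁻¹ • x) hEtotal
    simp only [smul_smul] at h2
    rw [inv_mul_cancel₀ hNM, one_smul] at h2
    rw [h2]
    congr 1
    have h3 : Q * (QM * (N₁ * N₂)) = (N₁ * N₂ * QM) * Q := by ring
    rw [h3, ← mul_assoc, inv_mul_cancel₀ hNM, one_mul]
  -- finish
  have hfinal : (C₁ * C₂) • TensorProduct.map S₁ S₂ w = (γ₁ * γ₂) • w := by
    have h1 : TensorProduct.map (C₁ • S₁) (C₂ • S₂) w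
        = (C₁ * C₂) • TensorProduct.map S₁ S₂ w := by
      rw [TensorProduct.map_smul_left, TensorProduct.map_smul_right, smul_smul,
        LinearMap.smul_apply]
    have h2 : TensorProduct.map (C₁ • S₁) (C₂ • S₂) w = (γ₁ * γ₂) • w := by
      rw [hγ₁, hγ₂, TensorProduct.map_smul_left, TensorProduct.map_smul_right, smul_smul,
        TensorProduct.map_id]
      simp
    rw [← h1, h2]
  have hsc : C₁ * C₂ * γ = C * Q * (γ₁ * γ₂) := by
    have hkey : (C₁ * C₂ * γ) • w = (C * Q * (γ₁ * γ₂)) • w := by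
      calc (C₁ * C₂ * γ) • w = (C₁ * C₂) • (γ • w) := by rw [smul_smul]
        _ = (C₁ * C₂) • (C • B) := by rw [hCB]
        _ = (C₁ * C₂) • (C • (Q • TensorProduct.map S₁ S₂ w)) := by rw [hBQ]
        _ = (C * Q) • ((C₁ * C₂) • TensorProduct.map S₁ S₂ w) := by
            rw [smul_smul, smul_smul, smul_smul]; ring_nf
        _ = (C * Q) • ((γ₁ * γ₂) • w) := by rw [hfinal]
        _ = (C * Q * (γ₁ * γ₂)) • w := by rw [smul_smul]
    by_contra hne
    have h0 : (C₁ * C₂ * γ - C * Q * (γ₁ * γ₂)) • w = 0 := by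
      rw [sub_smul, hkey, sub_self]
    have h1 := congrArg (fun x : V₁ ⊗[ℂ] V₂ =>
      (C₁ * C₂ * γ - C * Q * (γ₁ * γ₂))⁻¹ • x) h0
    simp only [smul_smul, smul_zero] at h1
    rw [inv_mul_cancel₀ (sub_ne_zero.mpr hne), one_smul] at h1
    exact hw (hwdef ▸ h1)
  rw [hQC] at hsc
  have := mul_left_cancel₀ (mul_ne_zero hC₁0 hC₂0) hsc
  rw [this]
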